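/- Let M* be a maximum matching in G and M₁ an ε'-approximately maximal matching in G. Partition M* into M*₀, M*₁, M*₂ according to the number (0, 1, or 2) of endpoints matched by M₁. Then |M*₀| ≤ ε'·μ(G), hence |M*₁| + |M*₂| ≥ (1 − ε')·μ(G), and |M₁| = |M*₂| + (1/2)|M*₁| + (number of M₁-edges with no endpoint in V(M*) counted appropriately) ≥ |M*₂| + (1/2)|M*₁|. -/

import Mathlib

/-!
Every edge of `M*₀` is an edge of `G` with no endpoint matched by `M₁`, so it must meet the
set `D` of deleted vertices witnessing approximate maximality; as the edges of `M*` are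
vertex-disjoint, `|M*₀| ≤ |D| ≤ ε'·μ(G)`; as `M*₀, M*₁, M*₂` cover `M*`, the second bound
follows. For the third, count the `M₁`-matched vertices lying on edges of `M*₁ ∪ M*₂`: at least
`2|M*₂| + |M*₁|` of them, and at most `|V(M₁)| ≤ 2|M₁|`.
-/

variable {V : Type*}

/-- A matching of `G`: a finset of edges of `G` that are pairwise vertex-disjoint. -/
def IsMatching (G : SimpleGraph V) (M : Finset (Sym2 V)) : Prop :=
  (∀ e ∈ M, e ∈ G.edgeSet) ∧
    ∀ e ∈ M, ∀ f ∈ M, e ≠ f → ∀ v : V, v ∈ e → v ∉ f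

/-- A vertex is matched by `M` if it belongs to some edge of `M`. -/
def Matched (M : Finset (Sym2 V)) (v : V) : Prop := ∃ e ∈ M, v ∈ e

/-- A maximal matching: every edge of `G` has a matched endpoint. -/
def IsMaximalMatching (G : SimpleGraph V) (M : Finset (Sym2 V)) : Prop :=
  IsMatching G M ∧ ∀ e ∈ G.edgeSet, ∃ v, v ∈ e ∧ Matched M v

/-- μ(G): the maximum matching size of `G`. -/
noncomputable def matchNum (G : SimpleGraph V) : ℕ :=
  sSup {n | ∃ M : Finset (Sym2 V), IsMatching G M ∧ M.card = n}

/-- The subgraph of `G` induced by the vertex set `S` (on the same vertex type). -/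
def restrictVerts (G : SimpleGraph V) (S : Set V) : SimpleGraph V where
  Adj u v := G.Adj u v ∧ u ∈ S ∧ v ∈ S
  symm := ⟨fun u v h => ⟨G.symm.symm _ _ h.1, h.2.2, h.2.1⟩⟩
  loopless := ⟨fun u h => G.loopless.irrefl u h.1⟩

/-- `M` is an ε-approximately maximal matching of `G`: it is maximal in a subgraph of `G`
obtained by deleting at most `ε * μ(G)` vertices. -/
def IsAMM (G : SimpleGraph V) (ε : ℝ) (M : Finset (Sym2 V)) : Prop :=
  IsMatching G M ∧ ∃ D : Finset V, (D.card : ℝ) ≤ ε * matchNum G ∧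
    IsMaximalMatching (restrictVerts G ((↑D : Set V)ᶜ)) M

open Finset

namespace IsMatching

variable {G : SimpleGraph V} {M N : Finset (Sym2 V)}

lemma mono (hM : IsMatching G M) (hNM : N ⊆ M) : IsMatching G N :=
  ⟨fun e he => hM.1 e (hNM he), fun e he f hf => hM.2 e (hNM he) f (hNM hf)⟩

lemma pairwiseDisjoint_toFinset [DecidableEq V] (hM : IsMatching G M) :
    (M : Set (Sym2 V)).PairwiseDisjoint Sym2.toFinset :=
  fun e he f hf hef => disjoint_left.mpr fun v hve hvf =>
    hM.2 e he f hf hef v (Sym2.mem_toFinset.mp hve) (Sym2.mem_toFinset.mp hvf)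

lemma sum_card_toFinset_inter_le [DecidableEq V] (hM : IsMatching G M) (S : Finset V) :
    ∑ e ∈ M, #(e.toFinset ∩ S) ≤ #S := by
  rw [← card_biUnion (hM.pairwiseDisjoint_toFinset.mono fun _ => inter_subset_left)]
  exact card_le_card (biUnion_subset.mpr fun _ _ => inter_subset_right)

lemma card_le_card_of_forall_exists_mem (hM : IsMatching G M) {S : Finset V}
    (hS : ∀ e ∈ M, ∃ v ∈ S, v ∈ e) : #M ≤ #S := by
  classical
  calc #M = ∑ _e ∈ M, 1 := card_eq_sum_ones M
    _ ≤ ∑ e ∈ M, #(e.toFinset ∩ S) := sum_le_sum fun e he => by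
        obtain ⟨v, hvS, hve⟩ := hS e he
        exact card_pos.mpr ⟨v, mem_inter.mpr ⟨Sym2.mem_toFinset.mpr hve, hvS⟩⟩
    _ ≤ #S := hM.sum_card_toFinset_inter_le S

end IsMatching

lemma matched_iff_mem_biUnion_toFinset [DecidableEq V] {M : Finset (Sym2 V)} {v : V} :
    Matched M v ↔ v ∈ M.biUnion Sym2.toFinset := by
  simp [Matched, Sym2.mem_toFinset]

lemma card_biUnion_toFinset_le [DecidableEq V] (M : Finset (Sym2 V)) :
    #(M.biUnion Sym2.toFinset) ≤ 2 * #M :=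
  calc #(M.biUnion Sym2.toFinset) ≤ ∑ e ∈ M, #e.toFinset := card_biUnion_le
    _ ≤ ∑ _e ∈ M, 2 := sum_le_sum fun e _ => by rw [Sym2.card_toFinset]; split <;> omega
    _ = 2 * #M := by rw [sum_const, smul_eq_mul, mul_comm]

lemma IsMatching.two_mul_card_add_card_le [DecidableEq V] {G : SimpleGraph V}
    {A B M : Finset (Sym2 V)} (hAB : IsMatching G (A ∪ B)) (hdisj : Disjoint A B)
    (hA : ∀ e ∈ A, ∀ v ∈ e, Matched M v) (hB : ∀ e ∈ B, ∃ v ∈ e, Matched M v) :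
    2 * #A + #B ≤ 2 * #M := by
  set T := M.biUnion Sym2.toFinset
  have hA2 : ∀ e ∈ A, 2 ≤ #(e.toFinset ∩ T) := fun e he => by
    have hsub : e.toFinset ⊆ T := fun v hv =>
      matched_iff_mem_biUnion_toFinset.mp (hA e he v (Sym2.mem_toFinset.mp hv))
    rw [inter_eq_left.mpr hsub, Sym2.card_toFinset_of_not_isDiag _
      (G.not_isDiag_of_mem_edgeSet (hAB.1 e (mem_union_left B he)))]
  have hB1 : ∀ e ∈ B, 1 ≤ #(e.toFinset ∩ T) := fun e he => by
    obtain ⟨v, hve, hvM⟩ := hB e he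
    exact card_pos.mpr ⟨v, mem_inter.mpr
      ⟨Sym2.mem_toFinset.mpr hve, matched_iff_mem_biUnion_toFinset.mp hvM⟩⟩
  calc 2 * #A + #B = ∑ _e ∈ A, 2 + ∑ _e ∈ B, 1 := by simp [mul_comm]
    _ ≤ ∑ e ∈ A, #(e.toFinset ∩ T) + ∑ e ∈ B, #(e.toFinset ∩ T) :=
        add_le_add (sum_le_sum hA2) (sum_le_sum hB1)
    _ = ∑ e ∈ A ∪ B, #(e.toFinset ∩ T) := (sum_union hdisj).symm
    _ ≤ #T := hAB.sum_card_toFinset_inter_le T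
    _ ≤ 2 * #M := card_biUnion_toFinset_le M

lemma IsMaximalMatching.exists_mem_notMem_of_forall_not_matched {G : SimpleGraph V}
    {S : Set V} {M : Finset (Sym2 V)} (hM : IsMaximalMatching (restrictVerts G S) M)
    {e : Sym2 V} (he : e ∈ G.edgeSet) (hunm : ∀ v ∈ e, ¬ Matched M v) : ∃ v ∈ e, v ∉ S := by
  induction e using Sym2.ind with
  | h a b =>
    by_contra! hS
    obtain ⟨v, hve, hvM⟩ :=
      hM.2 s(a, b) ⟨he, hS a (Sym2.mem_mk_left a b), hS b (Sym2.mem_mk_right a b)⟩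
    exact hunm v hve hvM

lemma IsAMM.card_le_of_forall_not_matched {G : SimpleGraph V} {ε : ℝ}
    {M N : Finset (Sym2 V)} (hM : IsAMM G ε M) (hN : IsMatching G N)
    (hunm : ∀ e ∈ N, ∀ v ∈ e, ¬ Matched M v) : (#N : ℝ) ≤ ε * matchNum G := by
  obtain ⟨-, D, hD, hmax⟩ := hM
  have hmeet : ∀ e ∈ N, ∃ v ∈ D, v ∈ e := fun e he => by
    obtain ⟨v, hve, hvD⟩ :=
      hmax.exists_mem_notMem_of_forall_not_matched (hN.1 e he) (hunm e he)
    exact ⟨v, by simpa using hvD, hve⟩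
  exact le_trans (by exact_mod_cast hN.card_le_card_of_forall_exists_mem hmeet) hD

theorem amm_partition_counts_general
    (G : SimpleGraph V) (ε' : ℝ)
    (Mstar : Finset (Sym2 V)) (hMstar : IsMatching G Mstar)
    (hmax : Mstar.card = matchNum G)
    (M₁ : Finset (Sym2 V)) (hM₁ : IsAMM G ε' M₁)
    (M0 M1s M2s : Finset (Sym2 V))
    (hM0 : ∀ e : Sym2 V, e ∈ M0 ↔ e ∈ Mstar ∧ ∀ v ∈ e, ¬ Matched M₁ v)
    (hM1 : ∀ e : Sym2 V, e ∈ M1s ↔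
      e ∈ Mstar ∧ (∃ v ∈ e, Matched M₁ v) ∧ (∃ v ∈ e, ¬ Matched M₁ v))
    (hM2 : ∀ e : Sym2 V, e ∈ M2s ↔ e ∈ Mstar ∧ ∀ v ∈ e, Matched M₁ v) :
    (M0.card : ℝ) ≤ ε' * matchNum G ∧
    (1 - ε') * matchNum G ≤ (M1s.card : ℝ) + (M2s.card : ℝ) ∧
    (M2s.card : ℝ) + (1/2) * (M1s.card : ℝ) ≤ (M₁.card : ℝ) := by
  classical
  have hM0_sub : M0 ⊆ Mstar := fun e he => ((hM0 e).mp he).1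
  have hM21_sub : M2s ∪ M1s ⊆ Mstar :=
    union_subset (fun e he => ((hM2 e).mp he).1) (fun e he => ((hM1 e).mp he).1)
  have hcover : Mstar ⊆ M0 ∪ M1s ∪ M2s := fun e he => by
    simp only [mem_union, hM0, hM1, hM2]
    by_cases hall : ∀ v ∈ e, Matched M₁ v
    · exact .inr ⟨he, hall⟩
    · by_cases hnone : ∀ v ∈ e, ¬ Matched M₁ v
      · exact .inl (.inl ⟨he, hnone⟩)
      · push Not at hall hnone
        exact .inl (.inr ⟨he, hnone, hall⟩)
  have hdisj : Disjoint M2s M1s := disjoint_left.mpr fun e h2 h1 => by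
    obtain ⟨v, hve, hvM⟩ := ((hM1 e).mp h1).2.2
    exact hvM (((hM2 e).mp h2).2 v hve)
  have h0 : (#M0 : ℝ) ≤ ε' * matchNum G :=
    hM₁.card_le_of_forall_not_matched (hMstar.mono hM0_sub) fun e he => ((hM0 e).mp he).2
  have hcount : #Mstar ≤ #M0 + #M1s + #M2s :=
    (card_le_card hcover).trans
      ((card_union_le _ _).trans (Nat.add_le_add_right (card_union_le _ _) _))
  have h21 : 2 * #M2s + #M1s ≤ 2 * #M₁ :=
    (hMstar.mono hM21_sub).two_mul_card_add_card_le hdisj (fun e he => ((hM2 e).mp he).2)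
      fun e he => ((hM1 e).mp he).2.1
  refine ⟨h0, ?_, ?_⟩
  · have hcount' : (matchNum G : ℝ) ≤ #M0 + #M1s + #M2s := by
      rw [← hmax]
      exact_mod_cast hcount
    linarith
  · have h21' : (2 * #M2s + #M1s : ℝ) ≤ 2 * #M₁ := by exact_mod_cast h21
    linarith

theorem amm_partition_counts [Fintype V] [DecidableEq V]
    (G : SimpleGraph V) (ε' : ℝ)
    (Mstar : Finset (Sym2 V)) (hMstar : IsMatching G Mstar)
    (hmax : Mstar.card = matchNum G)
    (M₁ : Finset (Sym2 V)) (hM₁ : IsAMM G ε' M₁)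
    (M0 M1s M2s : Finset (Sym2 V))
    (hM0 : ∀ e : Sym2 V, e ∈ M0 ↔ e ∈ Mstar ∧ ∀ v ∈ e, ¬ Matched M₁ v)
    (hM1 : ∀ e : Sym2 V, e ∈ M1s ↔
      e ∈ Mstar ∧ (∃ v ∈ e, Matched M₁ v) ∧ (∃ v ∈ e, ¬ Matched M₁ v))
    (hM2 : ∀ e : Sym2 V, e ∈ M2s ↔ e ∈ Mstar ∧ ∀ v ∈ e, Matched M₁ v) :
    (M0.card : ℝ) ≤ ε' * matchNum G ∧
    (1 - ε') * matchNum G ≤ (M1s.card : ℝ) + (M2s.card : ℝ) ∧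
    (M2s.card : ℝ) + (1/2) * (M1s.card : ℝ) ≤ (M₁.card : ℝ) :=
  amm_partition_counts_general G ε' Mstar hMstar hmax M₁ hM₁ M0 M1s M2s hM0 hM1 hM2
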